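/- arXiv:2103.07106 — 9 statements merged into one kernel-verified Lean document; each statement's English description precedes it below -/
import Mathlib

section
/- Let n ≥ 5 be an integer and x ≥ 2^n a real number. Then there are at least n+1 primes p with x < p < 2x. -/
/-!
Write `K(N)` for the number of primes in `(N, 2N]` and take `N = ⌊x⌋`; it suffices that
`N < 2 ^ K(N)` for `N ≥ 32`. For `N ≥ 1024` this comes out of Erdős' proof of Bertrand's
postulate: in `C(2N, N)` the primes of `(N, 2N]` contribute at most `(2N) ^ K(N)`, all other
prime powers at most `(2N) ^ √(2N) · 4 ^ (2N/3)`, and `4 ^ N < N · C(2N, N)`; hence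
`K(N) > √(2N) / 4`, which exceeds `log₂ N`. For `32 ≤ N < 1024` a list of consecutive primes
is checked: if `p` is the largest listed prime `≤ N`, the listed primes in `(p, 2p]` lie in
`(N, 2N]`, and there are at least `log₂ (2p)` of them.
-/

open Finset Real

theorem concaveOn_log_add_mul_sqrt_mul_log_sub_mul {c d : ℝ} (hc : 0 ≤ c) (hd : 0 ≤ d) :
    ConcaveOn ℝ (Set.Ioi 0.5) fun x => log x + c * (√(2 * x) * log (2 * x)) - d * x := by
  refine ((ConcaveOn.add ?_ (ConcaveOn.smul hc ?_)).sub ((convexOn_id (convex_Ioi 0.5)).smul hd))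
  · exact strictConcaveOn_log_Ioi.concaveOn.subset (Set.Ioi_subset_Ioi (by norm_num))
      (convex_Ioi 0.5)
  · convert! (strictConcaveOn_sqrt_mul_log_Ioi.concaveOn.comp_linearMap
      ((2 : ℝ) • LinearMap.id)) using 1
    ext x
    simp only [Set.mem_Ioi, Set.mem_preimage, LinearMap.smul_apply, LinearMap.id_coe, id_eq,
      smul_eq_mul]
    constructor <;> intro h <;> linarith

theorem real_main_inequality_five_fourths {x : ℝ} (hx : 1024 ≤ x) :
    x * (2 * x) ^ (5 / 4 * √(2 * x)) * 4 ^ (2 * x / 3) ≤ 4 ^ x := by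
  set f : ℝ → ℝ := fun x => log x + 5 / 4 * (√(2 * x) * log (2 * x)) - log 4 / 3 * x with hf
  have hconc : ConcaveOn ℝ (Set.Ioi 0.5) f :=
    concaveOn_log_add_mul_sqrt_mul_log_sub_mul (by norm_num) (by positivity)
  have hlog2 : 0 < log 2 := log_pos (by norm_num)
  have hlog_two_pow (k : ℕ) : log (2 ^ k) = k * log 2 := by rw [log_pow]
  have hlog4 : log 4 = 2 * log 2 := by
    rw [show (4 : ℝ) = 2 ^ 2 by norm_num, hlog_two_pow]; norm_num
  have h18 : 0 ≤ f 18 := by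
    have hsqrt : √(2 * 18 : ℝ) = 6 := by
      rw [show (2 * 18 : ℝ) = 6 ^ 2 by norm_num, sqrt_sq (by norm_num)]
    have h16 : log 16 ≤ log 18 := log_le_log (by norm_num) (by norm_num)
    have h32 : log 32 ≤ log (2 * 18) := log_le_log (by norm_num) (by norm_num)
    rw [show (16 : ℝ) = 2 ^ 4 by norm_num, hlog_two_pow] at h16
    rw [show (32 : ℝ) = 2 ^ 5 by norm_num, hlog_two_pow] at h32
    simp only [hf, hsqrt, hlog4]
    norm_num at h16 h32 ⊢
    linarith
  have h1024 : f 1024 ≤ 0 := by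
    have hsqrt : √(2 * 1024 : ℝ) ≤ 46 :=
      (sqrt_le_left (by norm_num)).2 (by norm_num)
    simp only [hf, hlog4, show (1024 : ℝ) = 2 ^ 10 by norm_num,
      show (2 * 2 ^ 10 : ℝ) = 2 ^ 11 by norm_num, hlog_two_pow] at hsqrt ⊢
    push_cast
    generalize √(2 ^ 11 : ℝ) = s at hsqrt ⊢
    nlinarith
  have hfx : f x ≤ 0 :=
    (hconc.right_le_of_le_left'' (by norm_num) (by norm_num; linarith) (by norm_num) hx
      (h1024.trans h18)).trans h1024
  have hx0 : 0 < x := by linarith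
  rw [← log_le_log_iff (by positivity) (by positivity), log_mul (by positivity) (by positivity),
    log_mul (by positivity) (by positivity), log_rpow (by positivity), log_rpow (by positivity),
    log_rpow (by positivity)]
  simp only [hf] at hfx
  linarith

theorem main_inequality_of_four_mul_le_sqrt {N K : ℕ} (hN : 1024 ≤ N)
    (hK : 4 * K ≤ Nat.sqrt (2 * N)) :
    N * (2 * N) ^ (Nat.sqrt (2 * N) + K) * 4 ^ (2 * N / 3) ≤ 4 ^ N := by
  have hx : (1024 : ℝ) ≤ N := by exact_mod_cast hN
  have hK' : (4 * K : ℝ) ≤ Nat.sqrt (2 * N) := by exact_mod_cast hK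
  have hsqrt : (Nat.sqrt (2 * N) : ℝ) ≤ √(2 * N) := by exact_mod_cast Real.nat_sqrt_le_real_sqrt
  rw [← @Nat.cast_le ℝ]
  simp only [Nat.cast_mul, Nat.cast_pow, Nat.cast_add, Nat.cast_ofNat, ← Real.rpow_natCast]
  refine le_trans ?_ (real_main_inequality_five_fourths hx)
  gcongr
  · linarith
  · linarith
  · norm_num
  · exact Nat.cast_div_le.trans (by norm_cast)

theorem prod_pow_factorization_centralBinom_range_le {N : ℕ} (hN : 0 < N) :
    ∏ p ∈ range (2 * N / 3 + 1), p ^ N.centralBinom.factorization p ≤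
      (2 * N) ^ Nat.sqrt (2 * N) * 4 ^ (2 * N / 3) := by
  set f : ℕ → ℕ := fun p => p ^ N.centralBinom.factorization p with hf
  set S := {p ∈ range (2 * N / 3 + 1) | p.Prime}
  have hS : ∏ p ∈ S, f p = ∏ p ∈ range (2 * N / 3 + 1), f p := by
    refine prod_filter_of_ne fun p _ h => ?_
    contrapose! h
    simp only [hf, Nat.factorization_eq_zero_of_not_prime _ h, pow_zero]
  rw [← hS, ← prod_filter_mul_prod_filter_not S (· ≤ Nat.sqrt (2 * N))]
  gcongr
  · refine (prod_le_pow_card _ _ _ fun p _ => Nat.pow_factorization_choose_le (by omega)).trans ?_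
    refine pow_le_pow_right₀ (by omega) ((card_le_card fun p hp => ?_).trans (Nat.card_Icc 1 _).le)
    simp only [S, mem_filter] at hp
    exact mem_Icc.2 ⟨hp.1.2.one_lt.le, hp.2⟩
  · refine le_trans ?_ (primorial_le_four_pow (2 * N / 3))
    refine (prod_le_prod' fun p hp => (?_ : f p ≤ p)).trans ?_
    · simp only [S, mem_filter, not_le] at hp
      -- a prime above `√(2N)` divides `centralBinom N` at most once
      exact (pow_le_pow_right₀ hp.1.2.one_lt.le
        (Nat.factorization_choose_le_one (Nat.sqrt_lt'.1 hp.2))).trans (pow_one p).le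
    · exact prod_le_prod_of_subset_of_one_le' (filter_subset _ _)
        fun p hp _ => (mem_filter.1 hp).2.one_lt.le

theorem centralBinom_le_mul_pow_card_primes_Ioc {N : ℕ} (hN : 2 < N) :
    N.centralBinom ≤ (2 * N) ^ Nat.sqrt (2 * N) * 4 ^ (2 * N / 3) *
      (2 * N) ^ #{p ∈ Ioc N (2 * N) | p.Prime} := by
  set f : ℕ → ℕ := fun p => p ^ N.centralBinom.factorization p with hf
  have hsmall : ∏ p ∈ range (N + 1), f p = ∏ p ∈ range (2 * N / 3 + 1), f p := by
    refine (prod_subset (range_subset_range.2 (by omega)) fun p hp hp' => ?_).symm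
    simp only [mem_range] at hp hp'
    by_cases hprime : p.Prime
    · simp only [hf, Nat.factorization_centralBinom_of_two_mul_self_lt_three_mul (p := p) hN
        (by omega) (by omega), pow_zero]
    · simp only [hf, Nat.factorization_eq_zero_of_not_prime _ hprime, pow_zero]
  have hlarge : ∏ p ∈ Ico (N + 1) (2 * N + 1), f p = ∏ p ∈ Ioc N (2 * N) with p.Prime, f p := by
    rw [prod_filter_of_ne fun p _ h => ?_, Ico_add_one_add_one_eq_Ioc]
    contrapose! h
    simp only [hf, Nat.factorization_eq_zero_of_not_prime _ h, pow_zero]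
  calc N.centralBinom = ∏ p ∈ range (2 * N + 1), f p :=
        (Nat.prod_pow_factorization_centralBinom N).symm
    _ = (∏ p ∈ range (N + 1), f p) * ∏ p ∈ Ico (N + 1) (2 * N + 1), f p :=
        (prod_range_mul_prod_Ico _ (by omega)).symm
    _ ≤ _ := by
        rw [hsmall, hlarge]
        gcongr
        · exact prod_pow_factorization_centralBinom_range_le (by omega)
        · exact prod_le_pow_card _ _ _ fun p _ => Nat.pow_factorization_choose_le (by omega)

theorem sqrt_lt_four_mul_card_primes_Ioc {N : ℕ} (hN : 1024 ≤ N) :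
    Nat.sqrt (2 * N) < 4 * #{p ∈ Ioc N (2 * N) | p.Prime} := by
  set K := #{p ∈ Ioc N (2 * N) | p.Prime}
  by_contra! hK
  refine (lt_irrefl (4 ^ N)) ?_
  calc 4 ^ N < N * N.centralBinom := Nat.four_pow_lt_mul_centralBinom N (by omega)
    _ ≤ N * ((2 * N) ^ Nat.sqrt (2 * N) * 4 ^ (2 * N / 3) * (2 * N) ^ K) := by
      gcongr
      exact centralBinom_le_mul_pow_card_primes_Ioc (by omega)
    _ = N * (2 * N) ^ (Nat.sqrt (2 * N) + K) * 4 ^ (2 * N / 3) := by ring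
    _ ≤ 4 ^ N := main_inequality_of_four_mul_le_sqrt hN hK

theorem eight_mul_sq_le_two_pow {n : ℕ} (hn : 10 ≤ n) : 8 * n ^ 2 ≤ 2 ^ n := by
  induction n, hn using Nat.le_induction with
  | base => norm_num
  | succ k hk ih => rw [pow_succ 2 k]; nlinarith

theorem lt_two_pow_card_primes_Ioc_of_large {N : ℕ} (hN : 1024 ≤ N) :
    N < 2 ^ #{p ∈ Ioc N (2 * N) | p.Prime} := by
  set K := #{p ∈ Ioc N (2 * N) | p.Prime}
  by_contra! h
  have hsq : (4 * K) ^ 2 ≤ 2 * N := by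
    rcases Nat.lt_or_ge K 10 with hK | hK
    · nlinarith
    · nlinarith [eight_mul_sq_le_two_pow hK]
  exact (sqrt_lt_four_mul_card_primes_Ioc hN).not_ge (Nat.le_sqrt'.2 (by nlinarith))

theorem lt_two_pow_card_primes_Ioc_of_certificate {ps : List ℕ} (hprime : ∀ p ∈ ps, p.Prime)
    (hnodup : ps.Nodup) {B : ℕ}
    (hcert : ∀ p ∈ ps, p < B → 2 * p ≤ 2 ^ (ps.filter fun q => p < q ∧ q ≤ 2 * p).length)
    {N : ℕ} (hN : N < B) (hlo : ∃ p ∈ ps, p ≤ N) :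
    N < 2 ^ #{q ∈ Ioc N (2 * N) | q.Prime} := by
  obtain ⟨p, hp, hmax⟩ := exists_max_image {q ∈ ps.toFinset | q ≤ N} id <| by
    obtain ⟨p, hp, hpN⟩ := hlo
    exact ⟨p, mem_filter.2 ⟨List.mem_toFinset.2 hp, hpN⟩⟩
  simp only [mem_filter, List.mem_toFinset, id, and_imp] at hp hmax
  obtain ⟨hp, hpN⟩ := hp
  set qs := ps.filter fun q => p < q ∧ q ≤ 2 * p
  -- `p` is the largest listed prime up to `N`, so the listed primes in `(p, 2p]` lie in `(N, 2N]`
  have hqs : ∀ q ∈ qs, N < q ∧ q ≤ 2 * p ∧ q.Prime := by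
    intro q hq
    simp only [qs, List.mem_filter, decide_eq_true_eq] at hq
    obtain ⟨hq, hpq, hq2p⟩ := hq
    refine ⟨?_, hq2p, hprime q hq⟩
    by_contra! hqN
    exact absurd (hmax q hq hqN) (by omega)
  have hcard : qs.length ≤ #{q ∈ Ioc N (2 * N) | q.Prime} := by
    rw [← List.toFinset_card_of_nodup (hnodup.filter _)]
    refine card_le_card fun q hq => ?_
    obtain ⟨hNq, hq2p, hq⟩ := hqs q (List.mem_toFinset.1 hq)
    exact mem_filter.2 ⟨mem_Ioc.2 ⟨hNq, by omega⟩, hq⟩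
  have h2p : 2 * p ≤ 2 ^ qs.length := hcert p hp (by omega)
  obtain ⟨q, hq⟩ : ∃ q, q ∈ qs := by
    refine List.exists_mem_of_length_pos (Nat.pos_of_ne_zero fun h => ?_)
    have := (hprime p hp).two_le
    rw [h] at h2p
    omega
  calc N < q := (hqs q hq).1
    _ ≤ 2 * p := (hqs q hq).2.1
    _ ≤ 2 ^ qs.length := h2p
    _ ≤ _ := Nat.pow_le_pow_right (by norm_num) hcard

def primes31To1093 : List ℕ :=
  [31, 37, 41, 43, 47, 53, 59, 61, 67, 71, 73, 79, 83, 89, 97, 101, 103, 107, 109, 113, 127,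
   131, 137, 139, 149, 151, 157, 163, 167, 173, 179, 181, 191, 193, 197, 199, 211, 223, 227,
   229, 233, 239, 241, 251, 257, 263, 269, 271, 277, 281, 283, 293, 307, 311, 313, 317, 331,
   337, 347, 349, 353, 359, 367, 373, 379, 383, 389, 397, 401, 409, 419, 421, 431, 433, 439,
   443, 449, 457, 461, 463, 467, 479, 487, 491, 499, 503, 509, 521, 523, 541, 547, 557, 563,
   569, 571, 577, 587, 593, 599, 601, 607, 613, 617, 619, 631, 641, 643, 647, 653, 659, 661,
   673, 677, 683, 691, 701, 709, 719, 727, 733, 739, 743, 751, 757, 761, 769, 773, 787, 797,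
   809, 811, 821, 823, 827, 829, 839, 853, 857, 859, 863, 877, 881, 883, 887, 907, 911, 919,
   929, 937, 941, 947, 953, 967, 971, 977, 983, 991, 997, 1009, 1013, 1019, 1021, 1031, 1033,
   1039, 1049, 1051, 1061, 1063, 1069, 1087, 1091, 1093]

set_option maxRecDepth 10000 in
theorem lt_two_pow_card_primes_Ioc_of_small {N : ℕ} (h32 : 32 ≤ N) (h1024 : N < 1024) :
    N < 2 ^ #{p ∈ Ioc N (2 * N) | p.Prime} := by
  have hprime : ∀ p ∈ primes31To1093, p.Prime := by
    simp only [primes31To1093, List.forall_mem_cons, List.not_mem_nil, IsEmpty.forall_iff,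
      implies_true, and_true]
    norm_num
  refine lt_two_pow_card_primes_Ioc_of_certificate hprime (by decide +kernel) (B := 1024)
    (by decide +kernel) h1024 ⟨31, List.mem_cons_self, by omega⟩

theorem lt_two_pow_card_primes_Ioc {N : ℕ} (hN : 32 ≤ N) :
    N < 2 ^ #{p ∈ Ioc N (2 * N) | p.Prime} := by
  rcases Nat.lt_or_ge N 1024 with h | h
  · exact lt_two_pow_card_primes_Ioc_of_small hN h
  · exact lt_two_pow_card_primes_Ioc_of_large h

theorem coe_filter_prime_Ioc_floor_subset {x : ℝ} (hx : 2 ≤ x) :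
    (({p ∈ Ioc ⌊x⌋₊ (2 * ⌊x⌋₊) | p.Prime} : Finset ℕ) : Set ℕ) ⊆
      {p : ℕ | p.Prime ∧ x < p ∧ (p : ℝ) < 2 * x} := by
  intro p hp
  simp only [coe_filter, mem_Ioc, Set.mem_ofPred_eq] at hp ⊢
  obtain ⟨⟨hlo, hhi⟩, hp⟩ := hp
  have hN : 2 ≤ ⌊x⌋₊ := Nat.le_floor (by exact_mod_cast hx)
  have hlt : p < 2 * ⌊x⌋₊ :=
    hhi.lt_of_ne fun h => Nat.not_prime_mul (by omega) (by omega) (h ▸ hp)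
  refine ⟨hp, Nat.lt_of_floor_lt hlo, ?_⟩
  calc (p : ℝ) < 2 * ⌊x⌋₊ := by exact_mod_cast hlt
    _ ≤ 2 * x := by gcongr; exact Nat.floor_le (by linarith)

/-- For `n ≥ 5` and real `x ≥ 2^n`, the interval `(x, 2x)` contains at least
`n + 1` primes. -/
theorem stmt_0 (n : ℕ) (hn : 5 ≤ n) (x : ℝ) (hx : (2 : ℝ) ^ n ≤ x) :
    n + 1 ≤ {p : ℕ | p.Prime ∧ x < (p : ℝ) ∧ (p : ℝ) < 2 * x}.ncard := by
  have hpow : 2 ^ n ≤ ⌊x⌋₊ := Nat.le_floor (by exact_mod_cast hx)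
  have h32 : 32 ≤ ⌊x⌋₊ := (Nat.pow_le_pow_right (by norm_num) hn).trans hpow
  have hcard : n < #{p ∈ Ioc ⌊x⌋₊ (2 * ⌊x⌋₊) | p.Prime} :=
    (Nat.pow_lt_pow_iff_right (by norm_num)).1 (hpow.trans_lt (lt_two_pow_card_primes_Ioc h32))
  have hfin : {p : ℕ | p.Prime ∧ x < p ∧ (p : ℝ) < 2 * x}.Finite :=
    (Set.finite_lt_nat ⌈2 * x⌉₊).subset fun p hp => Nat.lt_ceil.2 hp.2.2
  have hx2 : (2 : ℝ) ≤ x := (le_self_pow₀ (by norm_num) (by omega)).trans hx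
  calc n + 1 ≤ #{p ∈ Ioc ⌊x⌋₊ (2 * ⌊x⌋₊) | p.Prime} := hcard
    _ = (({p ∈ Ioc ⌊x⌋₊ (2 * ⌊x⌋₊) | p.Prime} : Finset ℕ) : Set ℕ).ncard :=
      (Set.ncard_coe_finset _).symm
    _ ≤ _ := Set.ncard_le_ncard (coe_filter_prime_Ioc_floor_subset hx2) hfin
end

section
/- For every integer n ≥ 2 there exist primes p_1 < p_2 < ... < p_n < p_{n+1} such that 1/p_1 + ... + 1/p_n < 1 < 1/p_1 + ... + 1/p_n + 1/p_{n+1}. -/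
/-!
The primes are chosen greedily. Write `δ = 1 - ∑ 1 / p i` for the deficit of the primes chosen so
far and `p` for the last of them, and keep `δ > 0` and `5 p δ ≤ 3`. A prime `q ∈ (1 / δ, 8 / (5 δ)]`
can then be appended, because `δ - 1 / q > 0` and `5 q (δ - 1 / q) = 5 q δ - 5 ≤ 3`; and at the
end a prime `Q ∈ (p, 8 p / 5]` has `1 / Q ≥ 5 / (8 p) > δ`. Start from `2, 3`; for `n = 2`, where
`(3, 24 / 5]` holds no prime, finish with `5` directly.

Everything thus rests on a prime in `(x, 8 x / 5]` for `x ≥ 4`. For `x ≥ 655360` this is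
Chebyshev's method: the weights `⌊t⌋ - ⌊t/2⌋ - ⌊t/3⌋ - ⌊t/5⌋ + ⌊t/30⌋` are at most `1`, so
`log (30m)! - log (15m)! - log (10m)! - log (6m)! + log m! ≤ ψ (30m)`, and Stirling's formula
turns this into `θ x ≥ ψ x - 2 √x log x ≳ 0.921 x`; against `θ x ≤ x log 4 ≈ 1.386 x` this gives
`θ (8 x / 5) > θ x`. Smaller `x` are covered by a chain of primes, each at most `8 / 5` times
its predecessor.
-/

open Finset Real
open scoped Nat Chebyshev
open ArithmeticFunction hiding log

namespace Stirling

theorem mul_log_sub_le_log_factorial (n : ℕ) : n * log n - n ≤ log n ! := by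
  rcases eq_or_ne n 0 with rfl | hn
  · simp
  have hlog : 0 ≤ log n := log_natCast_nonneg n
  have hpi : 0 ≤ log (2 * π) := log_nonneg (by linarith [pi_gt_three])
  linarith [le_log_factorial_stirling hn]

theorem log_factorial_le {n : ℕ} (hn : n ≠ 0) : log n ! ≤ n * log n - n + log n / 2 + 1 := by
  obtain ⟨k, rfl⟩ := Nat.exists_eq_succ_of_ne_zero hn
  have h := log_stirlingSeq'_antitone (Nat.zero_le k)
  simp only [Function.comp_apply, Nat.succ_eq_add_one, zero_add, stirlingSeq_one,
    log_stirlingSeq_formula] at h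
  have hk : (0 : ℝ) < (k + 1 : ℕ) := by positivity
  rw [log_div (exp_pos 1).ne' (by positivity), log_exp, log_sqrt (by norm_num),
    log_mul (by norm_num) hk.ne', log_div hk.ne' (exp_pos 1).ne', log_exp] at h
  linarith

end Stirling

theorem Real.log_le_sqrt_div_seventy {y : ℝ} (hy : 2 ^ 20 ≤ y) : log y ≤ √y / 70 := by
  have hs : 1024 ≤ √y := le_sqrt_of_sq_le (by linarith)
  have hlog_sqrt : log √y = log y / 2 := log_sqrt (by linarith)
  have hsplit : log √y = 10 * log 2 + log (√y / 1024) := by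
    rw [log_div (by linarith) (by norm_num), show (1024 : ℝ) = 2 ^ 10 by norm_num, log_pow]
    push_cast; ring
  have hle := log_le_sub_one_of_pos (x := √y / 1024) (by positivity)
  linarith [log_two_lt_d9]

namespace Chebyshev

theorem log_factorial_eq_sum_vonMangoldt (N : ℕ) :
    log N ! = ∑ n ∈ Ioc 0 N, Λ n * (N / n : ℕ) := by
  rw [← sum_Ioc_mul_zeta_eq_sum, vonMangoldt_mul_zeta]
  simp only [log_apply]
  rw [← log_prod]
  · rw [← Ico_add_one_add_one_eq_Ioc, zero_add, ← prod_Ico_id_eq_factorial]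
    push_cast; rfl
  · intro n hn
    exact_mod_cast (mem_Ioc.1 hn).1.ne'

theorem log_factorial_eq_sum_vonMangoldt_of_le {M N : ℕ} (h : M ≤ N) :
    log M ! = ∑ n ∈ Ioc 0 N, Λ n * (M / n : ℕ) := by
  rw [log_factorial_eq_sum_vonMangoldt]
  refine sum_subset (Ioc_subset_Ioc_right h) fun n hn hnM => ?_
  simp only [mem_Ioc, not_and, not_le] at hn hnM
  simp [Nat.div_eq_of_lt (hnM hn.1)]

theorem log_factorial_combination_le_psi (N : ℕ) :
    log N ! - log (N / 2)! - log (N / 3)! - log (N / 5)! + log (N / 30)! ≤ ψ N := by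
  simp only [log_factorial_eq_sum_vonMangoldt_of_le (Nat.div_le_self N _),
    log_factorial_eq_sum_vonMangoldt, psi, Nat.floor_natCast, ← sum_sub_distrib,
    ← sum_add_distrib]
  refine sum_le_sum fun n _ => ?_
  have hweight : N / n + N / 30 / n ≤ N / 2 / n + N / 3 / n + N / 5 / n + 1 := by
    have hcomm (j : ℕ) : N / j / n = N / n / j := by
      rw [Nat.div_div_eq_div_mul, Nat.div_div_eq_div_mul, Nat.mul_comm]
    rw [hcomm 2, hcomm 3, hcomm 5, hcomm 30]
    omega
  have hweight' : ((N / n : ℕ) : ℝ) + (N / 30 / n : ℕ) ≤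
      (N / 2 / n : ℕ) + (N / 3 / n : ℕ) + (N / 5 / n : ℕ) + 1 := by
    exact_mod_cast hweight
  linarith [mul_le_mul_of_nonneg_left hweight' (vonMangoldt_nonneg (n := n))]

theorem log_two_pow_mul_three_pow_mul_five_pow :
    log ((2 : ℝ) ^ 14 * 3 ^ 9 * 5 ^ 5) = 30 * log 30 - 15 * log 15 - 10 * log 10 - 6 * log 6 := by
  have h := congrArg log
    (by norm_num : ((2 : ℝ) ^ 14 * 3 ^ 9 * 5 ^ 5) * (15 ^ 15 * 10 ^ 10 * 6 ^ 6) = 30 ^ 30)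
  simp only [ne_eq, mul_eq_zero, OfNat.ofNat_ne_zero, not_false_eq_true, pow_eq_zero_iff, or_self,
    log_mul, log_pow, Nat.cast_ofNat] at h ⊢
  linarith

theorem psi_thirty_mul_ge {m : ℕ} (hm : m ≠ 0) :
    m * log (2 ^ 14 * 3 ^ 9 * 5 ^ 5) - 3 / 2 * log (30 * m) - 3 ≤ ψ (30 * m) := by
  have hcomb := log_factorial_combination_le_psi (30 * m)
  rw [show 30 * m / 2 = 15 * m by omega, show 30 * m / 3 = 10 * m by omega,
    show 30 * m / 5 = 6 * m by omega, show 30 * m / 30 = m by omega] at hcomb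
  have h30 := Stirling.mul_log_sub_le_log_factorial (30 * m)
  have h15 := Stirling.log_factorial_le (n := 15 * m) (by omega)
  have h10 := Stirling.log_factorial_le (n := 10 * m) (by omega)
  have h6 := Stirling.log_factorial_le (n := 6 * m) (by omega)
  have h1 := Stirling.mul_log_sub_le_log_factorial m
  push_cast at hcomb h30 h15 h10 h6
  have hlog (j : ℝ) (hj : j ≠ 0) : log (j * m) = log j + log m :=
    log_mul hj (by exact_mod_cast hm)
  rw [hlog 30 (by norm_num)] at h30 ⊢
  rw [hlog 15 (by norm_num)] at h15
  rw [hlog 10 (by norm_num)] at h10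
  rw [hlog 6 (by norm_num)] at h6
  have l15 : log (15 : ℝ) ≤ log 30 := log_le_log (by norm_num) (by norm_num)
  have l10 : log (10 : ℝ) ≤ log 30 := log_le_log (by norm_num) (by norm_num)
  have l6 : log (6 : ℝ) ≤ log 30 := log_le_log (by norm_num) (by norm_num)
  rw [log_two_pow_mul_three_pow_mul_five_pow]
  linarith

theorem psi_ge_of_thirty_le {x : ℝ} (hx : 30 ≤ x) :
    (x / 30 - 1) * log (2 ^ 14 * 3 ^ 9 * 5 ^ 5) - 3 / 2 * log x - 3 ≤ ψ x := by
  set m := ⌊x / 30⌋₊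
  have hm : m ≠ 0 := by
    rw [Ne, Nat.floor_eq_zero, not_lt]; linarith
  have hm_pos : (0 : ℝ) < m := by exact_mod_cast Nat.pos_of_ne_zero hm
  have hm_le : 30 * (m : ℝ) ≤ x := by
    linarith [Nat.floor_le (a := x / 30) (by linarith)]
  have hm_gt : x / 30 - 1 < m := by
    linarith [Nat.lt_floor_add_one (x / 30)]
  have hK : 0 ≤ log ((2 : ℝ) ^ 14 * 3 ^ 9 * 5 ^ 5) := log_nonneg (by norm_num)
  have hlog : log (30 * m) ≤ log x := log_le_log (by positivity) hm_le
  calc (x / 30 - 1) * log (2 ^ 14 * 3 ^ 9 * 5 ^ 5) - 3 / 2 * log x - 3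
      ≤ m * log (2 ^ 14 * 3 ^ 9 * 5 ^ 5) - 3 / 2 * log (30 * m) - 3 := by
        linarith [mul_le_mul_of_nonneg_right hm_gt.le hK]
    _ ≤ ψ (30 * m) := psi_thirty_mul_ge hm
    _ ≤ ψ x := psi_mono hm_le

theorem theta_lt_theta_eight_fifths_mul {x : ℝ} (hx : 655360 ≤ x) : θ x < θ (8 * x / 5) := by
  set y := 8 * x / 5 with hy_def
  have hy : 2 ^ 20 ≤ y := by rw [hy_def]; linarith
  have hψy := psi_ge_of_thirty_le (x := y) (by linarith)
  have hψθ := psi_sub_theta_le (x := y) (by linarith)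
  set K : ℝ := log (2 ^ 14 * 3 ^ 9 * 5 ^ 5)
  have hK_lo : 39 * log 2 ≤ K := by
    calc 39 * log 2 = log (2 ^ 39) := by rw [log_pow]; norm_num
      _ ≤ K := log_le_log (by positivity) (by norm_num)
  have hK_hi : K ≤ 41 * log 2 := by
    calc K ≤ log (2 ^ 41) := log_le_log (by positivity) (by norm_num)
      _ = 41 * log 2 := by rw [log_pow]; norm_num
  have hθx : θ x ≤ 2 * log 2 * x := by
    have h4 : log 4 = 2 * log 2 := by
      rw [show (4 : ℝ) = 2 ^ 2 by norm_num, log_pow]; push_cast; ring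
    simpa [h4] using theta_le_log4_mul_x (x := x) (by linarith)
  have hs : 1024 ≤ √y := le_sqrt_of_sq_le (by linarith)
  have hsy : √y * √y = y := mul_self_sqrt (by linarith)
  have hlog := log_le_sqrt_div_seventy hy
  have hsqrt_log : 2 * √y * log y ≤ y / 35 := by nlinarith
  have hsqrt_le : 1024 * √y ≤ y := by nlinarith
  have hyK : y / 30 * (39 * log 2) ≤ y / 30 * K := by gcongr
  have h2 := log_two_gt_d9
  have h2' := log_two_lt_d9
  have hxy : log 2 * x = 5 / 8 * (log 2 * y) := by rw [hy_def]; ring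
  have hy2 : 0.69 * y ≤ log 2 * y := by gcongr; linarith
  linarith

theorem exists_prime_of_theta_lt {a b : ℝ} (h : θ a < θ b) :
    ∃ p : ℕ, p.Prime ∧ a < p ∧ (p : ℝ) ≤ b := by
  by_contra! hno
  refine h.not_ge (sum_le_sum_of_subset_of_nonneg (fun p hp => ?_) fun p _ _ =>
    log_natCast_nonneg p)
  simp only [mem_filter, mem_Ioc] at hp ⊢
  have hpb : (p : ℝ) ≤ b := (Nat.le_floor_iff' hp.1.1.ne').1 hp.1.2
  exact ⟨⟨hp.1.1, Nat.le_floor (not_lt.1 fun hap => (hno p hp.2 hap).not_ge hpb)⟩, hp.2⟩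

end Chebyshev

theorem exists_mem_lt_and_le_of_isChain {f : ℕ → ℕ} (hf : Monotone f) {N : ℕ} :
    ∀ {a : ℕ} {l : List ℕ}, (a :: l).IsChain (fun a b => b ≤ f a) → a ≤ f N →
      N < (a :: l).getLast (List.cons_ne_nil a l) → ∃ p ∈ a :: l, N < p ∧ p ≤ f N := by
  intro a l
  induction l generalizing a with
  | nil => exact fun _ ha hN => ⟨a, List.mem_singleton_self a, hN, ha⟩
  | cons b l ih =>
    intro hl ha hN
    rw [List.isChain_cons_cons] at hl
    by_cases haN : N < a
    · exact ⟨a, List.mem_cons_self, haN, ha⟩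
    · obtain ⟨p, hp, hNp⟩ := ih hl.2 (hl.1.trans (hf (not_lt.1 haN))) (by simpa using hN)
      exact ⟨p, List.mem_cons_of_mem a hp, hNp⟩

theorem Nat.exists_prime_lt_and_five_mul_le_eight_mul {N : ℕ} (hN : 4 ≤ N) :
    ∃ p, p.Prime ∧ N < p ∧ 5 * p ≤ 8 * N := by
  rcases lt_or_ge N 655360 with hsmall | hlarge
  · set l : List ℕ := [7, 11, 17, 23, 31, 47, 73, 113, 179, 283, 449, 709, 1129, 1801, 2879,
      4603, 7351, 11743, 18787, 30059, 48091, 76943, 123091, 196927, 315083, 504121, 806581]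
    have hprime : ∀ p ∈ 5 :: l, p.Prime := by
      simp only [l, List.forall_mem_cons, List.not_mem_nil, IsEmpty.forall_iff, implies_true]
      norm_num
    have hf : Monotone fun n => 8 * n / 5 := fun a b hab => by dsimp only; omega
    obtain ⟨p, hp, hNp, hpN⟩ := exists_mem_lt_and_le_of_isChain hf (N := N) (a := 5) (l := l)
      (by decide) (by omega) (show N < 806581 by omega)
    exact ⟨p, hprime p hp, hNp, by omega⟩
  · obtain ⟨p, hp, hNp, hpN⟩ := Chebyshev.exists_prime_of_theta_lt
      (Chebyshev.theta_lt_theta_eight_fifths_mul (x := N) (by exact_mod_cast hlarge))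
    refine ⟨p, hp, by exact_mod_cast hNp, ?_⟩
    have : 5 * (p : ℝ) ≤ 8 * N := by linarith
    exact_mod_cast this

theorem exists_prime_gt_and_five_mul_le_eight_mul {x : ℚ} (hx : 4 ≤ x) :
    ∃ p : ℕ, p.Prime ∧ x < p ∧ 5 * (p : ℚ) ≤ 8 * x := by
  obtain ⟨p, hp, hNp, hpN⟩ :=
    Nat.exists_prime_lt_and_five_mul_le_eight_mul (N := ⌊x⌋₊) (Nat.le_floor hx)
  refine ⟨p, hp, (Nat.floor_lt' (by omega)).1 hNp, ?_⟩
  have : (5 * p : ℚ) ≤ 8 * ⌊x⌋₊ := by exact_mod_cast hpN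
  linarith [Nat.floor_le (by linarith : (0 : ℚ) ≤ x)]

def IsIncreasingPrimes (m : ℕ) (p : ℕ → ℕ) : Prop :=
  (∀ i ≤ m, (p i).Prime) ∧ ∀ i j, i < j → j ≤ m → p i < p j

namespace IsIncreasingPrimes

variable {m : ℕ} {p : ℕ → ℕ}

theorem add_two_le (h : IsIncreasingPrimes m p) : ∀ i ≤ m, i + 2 ≤ p i
  | 0, _ => (h.1 0 (Nat.zero_le m)).two_le
  | i + 1, hi => (add_two_le h i (by omega)).trans_lt (h.2 i (i + 1) (by omega) hi)

theorem update (h : IsIncreasingPrimes m p) {q : ℕ} (hq : q.Prime) (hlt : p m < q) :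
    IsIncreasingPrimes (m + 1) (Function.update p (m + 1) q) := by
  constructor
  · intro i hi
    rcases eq_or_ne i (m + 1) with rfl | hne
    · simpa
    · rw [Function.update_of_ne hne]; exact h.1 i (by omega)
  · intro i j hij hj
    rw [Function.update_of_ne (by omega : i ≠ m + 1)]
    rcases eq_or_ne j (m + 1) with rfl | hne
    · rw [Function.update_self]
      rcases eq_or_ne i m with rfl | hi
      · exact hlt
      · exact (h.2 i m (by omega) le_rfl).trans hlt
    · rw [Function.update_of_ne hne]; exact h.2 i j hij (by omega)

end IsIncreasingPrimes

def deficit (m : ℕ) (p : ℕ → ℕ) : ℚ := 1 - ∑ i ∈ range (m + 1), (1 : ℚ) / p i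

theorem deficit_succ (m : ℕ) (p : ℕ → ℕ) : deficit (m + 1) p = deficit m p - 1 / p (m + 1) := by
  simp only [deficit, sum_range_succ _ (m + 1)]; ring

theorem deficit_update_of_lt {m k : ℕ} (hmk : m < k) (p : ℕ → ℕ) (q : ℕ) :
    deficit m (Function.update p k q) = deficit m p := by
  unfold deficit
  congr 1
  refine sum_congr rfl fun i hi => ?_
  rw [Function.update_of_ne (by simp only [mem_range] at hi; omega)]

theorem deficit_update_succ (m : ℕ) (p : ℕ → ℕ) (q : ℕ) :
    deficit (m + 1) (Function.update p (m + 1) q) = deficit m p - 1 / q := by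
  rw [deficit_succ, deficit_update_of_lt (Nat.lt_succ_self m), Function.update_self]

def HasSmallDeficit (m : ℕ) (p : ℕ → ℕ) : Prop :=
  IsIncreasingPrimes m p ∧ 0 < deficit m p ∧ 5 * p m * deficit m p ≤ 3

theorem hasSmallDeficit_two_three : HasSmallDeficit 1 (· + 2) := by
  refine ⟨⟨fun i hi => ?_, fun i j hij hj => by dsimp only; omega⟩, ?_, ?_⟩
  · interval_cases i <;> norm_num
  all_goals norm_num [deficit, sum_range_succ]

namespace HasSmallDeficit

variable {m : ℕ} {p : ℕ → ℕ}

theorem exists_update (h : HasSmallDeficit m p) (hm : 1 ≤ m) :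
    ∃ q, HasSmallDeficit (m + 1) (Function.update p (m + 1) q) := by
  obtain ⟨hprimes, hpos, hsmall⟩ := h
  have hp3 : (3 : ℚ) ≤ p m := by
    exact_mod_cast (show 3 ≤ m + 2 by omega).trans (hprimes.add_two_le m le_rfl)
  have hinv : 5 * (p m : ℚ) / 3 ≤ 1 / deficit m p := by
    rw [div_le_div_iff₀ (by norm_num) hpos]; linarith
  obtain ⟨q, hq, hq_gt, hq_le⟩ := exists_prime_gt_and_five_mul_le_eight_mul (x := 1 / deficit m p)
    (by linarith)
  have hq0 : (0 : ℚ) < q := by exact_mod_cast hq.pos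
  have hq_mul : 1 < q * deficit m p := by rwa [div_lt_iff₀ hpos] at hq_gt
  have hq_mul_le : 5 * q * deficit m p ≤ 8 := by
    have := mul_le_mul_of_nonneg_right hq_le hpos.le
    rwa [mul_assoc 8, one_div_mul_cancel hpos.ne', mul_one] at this
  refine ⟨q, hprimes.update hq (by exact_mod_cast (by linarith : (p m : ℚ) < q)), ?_, ?_⟩
  · rw [deficit_update_succ, sub_pos, div_lt_iff₀ hq0]; linarith
  · rw [deficit_update_succ, Function.update_self, mul_sub, mul_one_div (5 * (q : ℚ)),
      mul_div_cancel_right₀ _ hq0.ne']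
    linarith

theorem exists_prime_deficit_lt (h : HasSmallDeficit m p) (hm : 2 ≤ m) :
    ∃ q, q.Prime ∧ p m < q ∧ deficit m p < 1 / q := by
  obtain ⟨hprimes, -, hsmall⟩ := h
  have hp4 : (4 : ℚ) ≤ p m := by
    exact_mod_cast (show 4 ≤ m + 2 by omega).trans (hprimes.add_two_le m le_rfl)
  obtain ⟨q, hq, hpq, hq_le⟩ := exists_prime_gt_and_five_mul_le_eight_mul hp4
  refine ⟨q, hq, by exact_mod_cast hpq, ?_⟩
  rw [lt_div_iff₀ (by exact_mod_cast hq.pos)]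
  nlinarith

end HasSmallDeficit

theorem exists_hasSmallDeficit {m : ℕ} (hm : 1 ≤ m) : ∃ p, HasSmallDeficit m p := by
  induction m, hm using Nat.le_induction with
  | base => exact ⟨_, hasSmallDeficit_two_three⟩
  | succ m hm ih =>
    obtain ⟨p, hp⟩ := ih
    obtain ⟨q, hq⟩ := hp.exists_update hm
    exact ⟨_, hq⟩

/-- For every `n ≥ 2` there are primes `p 0 < p 1 < ⋯ < p n` such that the sum of the
reciprocals of the first `n` of them is less than `1`, while adding the reciprocal of the
last one pushes the sum above `1`. -/
theorem stmt_3 (n : ℕ) (hn : 2 ≤ n) :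
    ∃ p : ℕ → ℕ, (∀ i, i ≤ n → (p i).Prime) ∧
      (∀ i j, i < j → j ≤ n → p i < p j) ∧
      ∑ i ∈ Finset.range n, (1 : ℚ) / p i < 1 ∧
      1 < ∑ i ∈ Finset.range (n + 1), (1 : ℚ) / p i := by
  obtain ⟨m, rfl⟩ : ∃ m, n = m + 1 := ⟨n - 1, by omega⟩
  obtain ⟨p, ⟨hprimes, hpos, -⟩, q, hq, hpq, hq_gt⟩ :
      ∃ p, HasSmallDeficit m p ∧ ∃ q, q.Prime ∧ p m < q ∧ deficit m p < 1 / q := by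
    rcases (by omega : m = 1 ∨ 2 ≤ m) with rfl | hm
    · exact ⟨_, hasSmallDeficit_two_three, 5, by norm_num, by norm_num,
        by norm_num [deficit, sum_range_succ]⟩
    · obtain ⟨p, hp⟩ := exists_hasSmallDeficit (by omega : 1 ≤ m)
      exact ⟨p, hp, hp.exists_prime_deficit_lt hm⟩
  obtain ⟨hprime, hmono⟩ := hprimes.update hq hpq
  refine ⟨_, hprime, hmono, sub_pos.1 ?_, sub_neg.1 ?_⟩
  · rwa [← deficit, deficit_update_of_lt (Nat.lt_succ_self m)]
  · rw [← deficit, deficit_update_succ]; linarith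
end

section
/- Define δ(n) to be the minimal nonnegative value of 1 - 1/p_1 - ... - 1/p_n over all collections of n distinct primes p_1, ..., p_n (this minimum exists and is positive). Then δ(n) ≤ 1/2^n for all n ≥ 5. -/
/-!
Build the primes greedily. If the defect `δ = 1 - ∑ 1/p` of the primes chosen so far lies
in `(0, 1]`, Bertrand's postulate gives a prime `q` with `1/δ < q ≤ 2/δ`; adding it keeps the
defect positive and at least halves it. Starting from the empty set this gives `n` primes with
defect in `(0, 1/2^n]`. Each new `1/q` is below the current defect, which in turn stays below
every `1/p` already chosen, so the primes are distinct.
-/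

/-- `delta n` is the infimum of the nonnegative values `1 - 1/p₁ - ⋯ - 1/pₙ`
over all collections of `n` distinct primes `p₁, …, pₙ`. -/
noncomputable def delta (n : ℕ) : ℝ :=
  sInf {x : ℝ | 0 ≤ x ∧ ∃ s : Finset ℕ, s.card = n ∧ (∀ p ∈ s, p.Prime) ∧
    x = 1 - ∑ p ∈ s, (1 : ℝ) / p}

noncomputable def reciprocalDefect (s : Finset ℕ) : ℝ := 1 - ∑ p ∈ s, (1 : ℝ) / p

lemma reciprocalDefect_insert {s : Finset ℕ} {q : ℕ} (hq : q ∉ s) :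
    reciprocalDefect (insert q s) = reciprocalDefect s - 1 / q := by
  rw [reciprocalDefect, reciprocalDefect, Finset.sum_insert hq]
  ring

lemma delta_le_reciprocalDefect {s : Finset ℕ} (hprime : ∀ p ∈ s, p.Prime)
    (hnonneg : 0 ≤ reciprocalDefect s) : delta s.card ≤ reciprocalDefect s :=
  csInf_le ⟨0, fun _ hx ↦ hx.1⟩ ⟨hnonneg, s, rfl, hprime, rfl⟩

lemma exists_prime_lt_and_le_two_mul_real {x : ℝ} (hx : 1 ≤ x) :
    ∃ q : ℕ, q.Prime ∧ x < q ∧ (q : ℝ) ≤ 2 * x := by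
  have hfloor : ⌊x⌋₊ ≠ 0 := (Nat.floor_pos.mpr hx).ne'
  obtain ⟨q, hq, hlt, hle⟩ := Nat.exists_prime_lt_and_le_two_mul ⌊x⌋₊ hfloor
  refine ⟨q, hq, ?_, ?_⟩
  · calc x < ⌊x⌋₊ + 1 := Nat.lt_floor_add_one x
      _ ≤ q := by exact_mod_cast hlt
  · calc (q : ℝ) ≤ 2 * ⌊x⌋₊ := by exact_mod_cast hle
      _ ≤ 2 * x := by gcongr; exact Nat.floor_le (by linarith)

lemma exists_prime_half_le_inv_lt {δ : ℝ} (hpos : 0 < δ) (hle : δ ≤ 1) :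
    ∃ q : ℕ, q.Prime ∧ 1 / (q : ℝ) < δ ∧ δ / 2 ≤ 1 / q := by
  obtain ⟨q, hq, hlt, hle⟩ := exists_prime_lt_and_le_two_mul_real (one_le_one_div hpos hle)
  have hqpos : (0 : ℝ) < q := by exact_mod_cast hq.pos
  refine ⟨q, hq, ?_, ?_⟩
  · rwa [div_lt_iff₀ hqpos, ← div_lt_iff₀' hpos]
  · rw [div_le_div_iff₀ two_pos hqpos]
    calc δ * q ≤ δ * (2 * (1 / δ)) := by gcongr
      _ = 1 * 2 := by field_simp

lemma exists_primes_reciprocalDefect_le (n : ℕ) :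
    ∃ s : Finset ℕ, s.card = n ∧ (∀ p ∈ s, p.Prime) ∧ 0 < reciprocalDefect s ∧
      reciprocalDefect s ≤ 1 / 2 ^ n ∧ ∀ p ∈ s, reciprocalDefect s ≤ 1 / p := by
  induction n with
  | zero =>
    exact ⟨∅, rfl, by simp, by simp [reciprocalDefect], by simp [reciprocalDefect], by simp⟩
  | succ n ih =>
    obtain ⟨s, hcard, hprime, hpos, hle, hbelow⟩ := ih
    have hle_one : reciprocalDefect s ≤ 1 :=
      hle.trans (div_le_one_of_le₀ (one_le_pow₀ one_le_two) (by positivity))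
    obtain ⟨q, hq, hq_lt, hq_ge⟩ := exists_prime_half_le_inv_lt hpos hle_one
    have hqs : q ∉ s := fun h ↦ (hq_lt.trans_le (hbelow q h)).false
    refine ⟨insert q s, by rw [Finset.card_insert_of_notMem hqs, hcard], ?_, ?_, ?_, ?_⟩
    · simpa only [Finset.forall_mem_insert] using ⟨hq, hprime⟩
    · rw [reciprocalDefect_insert hqs]
      linarith
    · rw [reciprocalDefect_insert hqs, pow_succ, ← div_div]
      linarith
    · have hq_inv_pos : (0 : ℝ) < 1 / q := by have := hq.pos; positivity
      simp only [Finset.forall_mem_insert, reciprocalDefect_insert hqs]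
      exact ⟨by linarith, fun p hp ↦ by linarith [hbelow p hp]⟩

theorem stmt_4_general (n : ℕ) : delta n ≤ 1 / 2 ^ n := by
  obtain ⟨s, rfl, hprime, hpos, hle, -⟩ := exists_primes_reciprocalDefect_le n
  exact (delta_le_reciprocalDefect hprime hpos.le).trans hle

/-- For `n ≥ 5` one has `δ(n) ≤ 1/2^n`. -/
theorem stmt_4 (n : ℕ) (hn : 5 ≤ n) : delta n ≤ 1 / 2 ^ n :=
  stmt_4_general n
end

section
/- Let p_0, ..., p_N be distinct primes, P = p_0···p_N, and P_l = P / p_l for each l. Then there do not exist positive integers β_0, ..., β_N with N·P = β_0·P_0 + ... + β_N·P_N. -/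
/-!
Each `p l` divides `N * P` and every `P_i` with `i ≠ l`, hence also `β l * P_l`; being coprime to
`P_l`, it divides `β l`. So `β l ≥ p l`, and `∑ β l * P_l ≥ ∑ p l * P_l = (N + 1) * P > N * P`.
-/

open Finset Function

section

variable {ι : Type*} [Fintype ι] {p : ι → ℕ} {i l : ι}

theorem mul_prod_div_self : p l * ((∏ j, p j) / p l) = ∏ j, p j :=
  Nat.mul_div_cancel' (dvd_prod_of_mem p (mem_univ l))

variable [DecidableEq ι]

theorem prod_div_eq_prod_erase (hl : p l ≠ 0) : (∏ j, p j) / p l = ∏ j ∈ univ.erase l, p j := by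
  rw [← mul_prod_erase _ _ (mem_univ l), Nat.mul_div_cancel_left _ (Nat.pos_of_ne_zero hl)]

theorem dvd_prod_div_of_ne (hi : p i ≠ 0) (h : l ≠ i) : p l ∣ (∏ j, p j) / p i := by
  rw [prod_div_eq_prod_erase hi]
  exact dvd_prod_of_mem p (mem_erase.mpr ⟨h, mem_univ l⟩)

theorem coprime_prod_div_self (hcop : Pairwise (Nat.Coprime on p)) (hl : p l ≠ 0) :
    Nat.Coprime (p l) ((∏ j, p j) / p l) := by
  rw [prod_div_eq_prod_erase hl]
  exact Nat.Coprime.prod_right fun j hj => hcop (ne_of_mem_erase hj).symm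

theorem dvd_of_dvd_sum_mul_prod_div (hcop : Pairwise (Nat.Coprime on p)) (hp : ∀ j, p j ≠ 0)
    {β : ι → ℕ} (h : p l ∣ ∑ j, β j * ((∏ k, p k) / p j)) : p l ∣ β l := by
  have hrest : p l ∣ ∑ j ∈ univ.erase l, β j * ((∏ k, p k) / p j) :=
    dvd_sum fun j hj => (dvd_prod_div_of_ne (hp j) (ne_of_mem_erase hj).symm).mul_left _
  rw [← add_sum_erase _ _ (mem_univ l), Nat.dvd_add_left hrest] at h
  exact (coprime_prod_div_self hcop (hp l)).dvd_of_dvd_mul_right h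

theorem card_mul_prod_le_sum_mul_prod_div (hcop : Pairwise (Nat.Coprime on p))
    (hp : ∀ j, p j ≠ 0) {β : ι → ℕ} (hβ : ∀ j, 0 < β j)
    (h : ∀ l, p l ∣ ∑ j, β j * ((∏ k, p k) / p j)) :
    Fintype.card ι * ∏ k, p k ≤ ∑ j, β j * ((∏ k, p k) / p j) :=
  calc Fintype.card ι * ∏ k, p k = ∑ j, p j * ((∏ k, p k) / p j) := by
        simp only [mul_prod_div_self, sum_const, card_univ, smul_eq_mul]
    _ ≤ ∑ j, β j * ((∏ k, p k) / p j) := sum_le_sum fun j _ =>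
        Nat.mul_le_mul_right _ (Nat.le_of_dvd (hβ j) (dvd_of_dvd_sum_mul_prod_div hcop hp (h j)))

end

/-- If `p 0, …, p N` are distinct primes, `P` their product and `P_l = P / p l`, then
`N * P` is not a positive integer combination of the `P_l`. -/
theorem stmt_8 (N : ℕ) (p : Fin (N + 1) → ℕ) (hp : ∀ l, (p l).Prime)
    (hinj : Function.Injective p) :
    ¬ ∃ β : Fin (N + 1) → ℕ, (∀ l, 0 < β l) ∧
      N * ∏ l, p l = ∑ l, β l * ((∏ i, p i) / p l) := by
  rintro ⟨β, hβ, heq⟩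
  have hcop : Pairwise (Nat.Coprime on p) := fun i j hij =>
    (Nat.coprime_primes (hp i) (hp j)).mpr (hinj.ne hij)
  have hdvd : ∀ l, p l ∣ ∑ i, β i * ((∏ k, p k) / p i) := fun l =>
    heq ▸ (dvd_prod_of_mem p (mem_univ l)).mul_left N
  have hle := card_mul_prod_le_sum_mul_prod_div hcop (fun l => (hp l).ne_zero) hβ hdvd
  rw [← heq, Fintype.card_fin] at hle
  have hP : 0 < ∏ k, p k := prod_pos fun k _ => (hp k).pos
  nlinarith
end

section
/- Call a pair of tuples of positive integers d = (d_1, ..., d_k), a = (a_0, ..., a_N) a regular pair if for every subset of r weights a_{i_1}, ..., a_{i_r} whose gcd δ is greater than 1, there exist r degrees d_{s_1}, ..., d_{s_r} whose gcd is divisible by δ. If (d, a) is a regular pair and, up to permutation, a = (d_1, ..., d_k, a_k, ..., a_N), then a_k = a_{k+1} = ... = a_N = 1. -/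
/-
Suppose a weight `a_l` outside the image of the degrees has a prime factor `p`, and let `I` be
the set of weights divisible by `p`. Regularity yields `#I` degrees divisible by `p`; these
reappear among the weights, inside `I` but not at `l`, so `I` would have more than `#I` elements.
-/

/-- A pair of tuples of degrees `d = (d₁, …, d_k)` and weights `a = (a₀, …, a_N)` is a
regular pair if for every collection of weights whose gcd `δ` is greater than `1` there is
a collection of degrees of the same cardinality whose gcd is divisible by `δ`. -/
def IsRegularPair {k N : ℕ} (d : Fin k → ℕ) (a : Fin (N + 1) → ℕ) : Prop :=
  ∀ I : Finset (Fin (N + 1)), 1 < I.gcd a →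
    ∃ J : Finset (Fin k), J.card = I.card ∧ I.gcd a ∣ J.gcd d

theorem Finset.one_lt_gcd_of_dvd {ι : Type*} {s : Finset ι} {f : ι → ℕ} {p : ℕ} (hp : 1 < p)
    (hdvd : ∀ i ∈ s, p ∣ f i) {l : ι} (hl : l ∈ s) (hfl : f l ≠ 0) : 1 < s.gcd f := by
  have hgcd : s.gcd f ≠ 0 := fun h => hfl (Finset.gcd_eq_zero_iff.mp h l hl)
  exact hp.trans_le (Nat.le_of_dvd (Nat.pos_of_ne_zero hgcd) (Finset.dvd_gcd hdvd))

theorem IsRegularPair.exists_card_eq_of_dvd {k N : ℕ} {d : Fin k → ℕ} {a : Fin (N + 1) → ℕ}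
    (hreg : IsRegularPair d a) {p : ℕ} (hp : 1 < p) {l : Fin (N + 1)} (hpl : p ∣ a l)
    (hal : a l ≠ 0) :
    ∃ J : Finset (Fin k), J.card = (Finset.univ.filter fun i => p ∣ a i).card ∧
      ∀ u ∈ J, p ∣ d u := by
  set I := Finset.univ.filter fun i => p ∣ a i
  have hdvd : ∀ i ∈ I, p ∣ a i := fun i hi => (Finset.mem_filter.mp hi).2
  obtain ⟨J, hcard, hJ⟩ := hreg I (Finset.one_lt_gcd_of_dvd hp hdvd (by simp [I, hpl]) hal)
  exact ⟨J, hcard, fun u hu =>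
    (Finset.dvd_gcd hdvd).trans (hJ.trans (Finset.gcd_dvd hu))⟩

theorem stmt_9_general {k N : ℕ} (d : Fin k → ℕ) (a : Fin (N + 1) → ℕ)
    (ha : ∀ l, 0 < a l)
    (hreg : IsRegularPair d a)
    (e : Fin k ↪ Fin (N + 1)) (he : ∀ u, a (e u) = d u) :
    ∀ l : Fin (N + 1), (∀ u, e u ≠ l) → a l = 1 := by
  intro l hl
  by_contra hal
  obtain ⟨p, hp, hpl⟩ := Nat.exists_prime_and_dvd hal
  obtain ⟨J, hcard, hJ⟩ := hreg.exists_card_eq_of_dvd hp.one_lt hpl (ha l).ne'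
  set I := Finset.univ.filter fun i => p ∣ a i
  have hsub : J.map e ⊆ I := by
    intro i hi
    obtain ⟨u, hu, rfl⟩ := Finset.mem_map.mp hi
    exact Finset.mem_filter.mpr ⟨Finset.mem_univ _, he u ▸ hJ u hu⟩
  have hssub : J.map e ⊂ I :=
    (Finset.ssubset_iff_of_subset hsub).mpr ⟨l, by simp [I, hpl], by simp [hl]⟩
  simpa [hcard] using Finset.card_lt_card hssub

/-- If `(d, a)` is a regular pair and, up to permutation, `a = (d₁, …, d_k, a_k, …, a_N)`,
then all the remaining weights `a_k, …, a_N` are equal to `1`. -/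
theorem stmt_9 {k N : ℕ} (d : Fin k → ℕ) (a : Fin (N + 1) → ℕ)
    (hd : ∀ u, 0 < d u) (ha : ∀ l, 0 < a l)
    (hreg : IsRegularPair d a)
    (e : Fin k ↪ Fin (N + 1)) (he : ∀ u, a (e u) = d u) :
    ∀ l : Fin (N + 1), (∀ u, e u ≠ l) → a l = 1 :=
  stmt_9_general d a ha hreg e he
end

section
/- Let (d, a) be a regular pair with d = (d_1, ..., d_k), a = (a_0, ..., a_N), N ≥ k, such that every weight a_l > 1. Then Σ d_u - Σ a_l > 0 (i.e., the pair is of general type). -/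
open ArithmeticFunction Finset
open scoped ArithmeticFunction.Moebius

def totientSubTwoMoebius (m : ℕ) : ℤ := Nat.totient m - 2 * μ m

theorem totientSubTwoMoebius_nonneg {m : ℕ} (hm : 2 ≤ m) : 0 ≤ totientSubTwoMoebius m := by
  unfold totientSubTwoMoebius
  obtain rfl | hm := hm.eq_or_lt
  · simp [moebius_apply_prime Nat.prime_two]
  have hφ : 2 ≤ Nat.totient m := by
    have := Nat.totient_pos.2 (by omega : 0 < m)
    have := (Nat.totient_eq_one_iff (n := m)).not.2 (by omega)
    omega
  have := abs_le.1 (abs_moebius_le_one (n := m))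
  omega

theorem sum_divisors_moebius_of_ne_one {n : ℕ} (hn : n ≠ 1) : ∑ m ∈ n.divisors, μ m = 0 := by
  rw [← coe_mul_zeta_apply, moebius_mul_coe_zeta, one_apply_ne hn]

theorem sum_divisors_erase_one_totientSubTwoMoebius {n : ℕ} (hn : 2 ≤ n) :
    ∑ m ∈ n.divisors.erase 1, totientSubTwoMoebius m = n + 1 := by
  have hsum : ∑ m ∈ n.divisors, totientSubTwoMoebius m = n := by
    simp only [totientSubTwoMoebius, sum_sub_distrib, ← mul_sum,
      sum_divisors_moebius_of_ne_one (by omega : n ≠ 1)]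
    rw [mul_zero, sub_zero]
    exact_mod_cast Nat.sum_totient n
  have h1 : totientSubTwoMoebius 1 = -1 := by simp [totientSubTwoMoebius]
  have := add_sum_erase n.divisors totientSubTwoMoebius (Nat.one_mem_divisors.2 (by omega))
  omega

theorem sum_divisors_erase_one_totientSubTwoMoebius_le {n : ℕ} (hn : 0 < n) :
    ∑ m ∈ n.divisors.erase 1, totientSubTwoMoebius m ≤ n + 1 := by
  obtain rfl | hn := (show 1 ≤ n from hn).eq_or_lt
  · simp
  · exact (sum_divisors_erase_one_totientSubTwoMoebius hn).le

theorem filter_dvd_Icc_two_eq_divisors_erase_one {n M : ℕ} (hn : 0 < n) (hnM : n ≤ M) :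
    {m ∈ Icc 2 M | m ∣ n} = n.divisors.erase 1 := by
  ext m
  simp only [mem_filter, mem_Icc, mem_erase, Nat.mem_divisors]
  constructor
  · rintro ⟨⟨hm, -⟩, hmn⟩
    exact ⟨by omega, hmn, by omega⟩
  · rintro ⟨hm, hmn, -⟩
    have := Nat.pos_of_dvd_of_pos hmn hn
    have := Nat.le_of_dvd hn hmn
    exact ⟨⟨by omega, by omega⟩, hmn⟩

theorem sum_card_filter_dvd_nsmul {ι R : Type*} [Fintype ι] [AddCommMonoid R] (w : ℕ → R)
    {a : ι → ℕ} {M : ℕ} (ha : ∀ i, 0 < a i) (haM : ∀ i, a i ≤ M) :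
    ∑ m ∈ Icc 2 M, #{i | m ∣ a i} • w m = ∑ i, ∑ m ∈ (a i).divisors.erase 1, w m := by
  simp_rw [← sum_const, sum_filter]
  rw [sum_comm]
  refine sum_congr rfl fun i _ => ?_
  rw [← sum_filter, filter_dvd_Icc_two_eq_divisors_erase_one (ha i) (haM i)]

theorem sum_add_one_le_of_card_filter_dvd_le {ι κ : Type*} [Fintype ι] [Fintype κ]
    {a : ι → ℕ} {d : κ → ℕ} (ha : ∀ i, 2 ≤ a i) (hd : ∀ j, 0 < d j)
    (hcard : ∀ m, 2 ≤ m → #{i | m ∣ a i} ≤ #{j | m ∣ d j}) :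
    ∑ i, (a i + 1) ≤ ∑ j, (d j + 1) := by
  set M := ∑ i, a i + ∑ j, d j
  have haM : ∀ i, a i ≤ M := fun i =>
    (single_le_sum (fun i _ => Nat.zero_le (a i)) (mem_univ i)).trans (Nat.le_add_right _ _)
  have hdM : ∀ j, d j ≤ M := fun j =>
    (single_le_sum (fun j _ => Nat.zero_le (d j)) (mem_univ j)).trans (Nat.le_add_left _ _)
  zify
  calc ∑ i, ((a i : ℤ) + 1)
      = ∑ i, ∑ m ∈ (a i).divisors.erase 1, totientSubTwoMoebius m :=
        sum_congr rfl fun i _ => (sum_divisors_erase_one_totientSubTwoMoebius (ha i)).symm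
    _ = ∑ m ∈ Icc 2 M, #{i | m ∣ a i} • totientSubTwoMoebius m :=
        (sum_card_filter_dvd_nsmul _ (fun i => by have := ha i; omega) haM).symm
    _ ≤ ∑ m ∈ Icc 2 M, #{j | m ∣ d j} • totientSubTwoMoebius m := by
        refine sum_le_sum fun m hm => ?_
        have hm := (mem_Icc.1 hm).1
        exact nsmul_le_nsmul_left (totientSubTwoMoebius_nonneg hm) (hcard m hm)
    _ = ∑ j, ∑ m ∈ (d j).divisors.erase 1, totientSubTwoMoebius m :=
        sum_card_filter_dvd_nsmul _ hd hdM
    _ ≤ ∑ j, ((d j : ℤ) + 1) :=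
        sum_le_sum fun j _ => sum_divisors_erase_one_totientSubTwoMoebius_le (hd j)

theorem IsRegularPair.card_filter_dvd_le {k N : ℕ} {d : Fin k → ℕ} {a : Fin (N + 1) → ℕ}
    (hreg : IsRegularPair d a) (ha : ∀ l, a l ≠ 0) {m : ℕ} (hm : 2 ≤ m) :
    #{l | m ∣ a l} ≤ #{u | m ∣ d u} := by
  set I : Finset (Fin (N + 1)) := {l | m ∣ a l}
  obtain hI | ⟨l, hl⟩ := I.eq_empty_or_nonempty
  · simp [hI]
  have hmI : m ∣ I.gcd a := dvd_gcd fun i hi => (mem_filter.1 hi).2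
  have hI0 : I.gcd a ≠ 0 := fun h => ha l (gcd_eq_zero_iff.1 h l hl)
  obtain ⟨J, hJ, hIJ⟩ := hreg I (lt_of_lt_of_le hm (Nat.le_of_dvd (Nat.pos_of_ne_zero hI0) hmI))
  rw [← hJ]
  exact card_le_card fun u hu => mem_filter.2 ⟨mem_univ u, (hmI.trans hIJ).trans (gcd_dvd hu)⟩

/-- A regular pair with `N ≥ k` all of whose weights are greater than `1` is of
general type: the sum of the degrees exceeds the sum of the weights. -/
theorem stmt_10 {k N : ℕ} (d : Fin k → ℕ) (a : Fin (N + 1) → ℕ)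
    (hd : ∀ u, 0 < d u) (ha : ∀ l, 1 < a l) (hkN : k ≤ N)
    (hreg : IsRegularPair d a) :
    ∑ l, a l < ∑ u, d u := by
  have h := sum_add_one_le_of_card_filter_dvd_le ha hd
    fun m hm => hreg.card_filter_dvd_le (fun l => (zero_lt_one.trans (ha l)).ne') hm
  simp only [sum_add_distrib, sum_const, card_univ, Fintype.card_fin, smul_eq_mul, mul_one] at h
  omega
end

section
/- Let d_1 be a positive integer and a_0, ..., a_N positive integers with N > 1, each a_l dividing d_1, and assume the pair ((d_1),(a_0,...,a_N)) is regular, meaning any δ > 1 divides at most one weight a_l, and d_1 > a_0 + ... + a_N. Then there exist positive integers β_0, ..., β_N with d_1 = β_0·a_0 + ... + β_N·a_N. -/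
/-- Positive-representability consequence of the Chicken McNugget theorem. -/
lemma aux_chicken (a b k : ℕ) (cop : Nat.Coprime a b) (ha : 1 < a) (hb : 1 < b)
    (hk : a * b - a - b < k) : ∃ x y : ℕ, x * a + y * b = k := by
  have H := frobeniusNumber_pair cop ha hb
  have hmem : k ∈ AddSubmonoid.closure ({a, b} : Set ℕ) := by
    by_contra hc
    exact absurd (H.2 hc) (not_le.mpr hk)
  rw [AddSubmonoid.mem_closure_pair] at hmem
  obtain ⟨x, y, h⟩ := hmem
  exact ⟨x, y, by simpa [smul_eq_mul] using h⟩

lemma aux_sum_le_prod {α : Type*} (s : Finset α) (f : α → ℕ) (h : ∀ i ∈ s, 2 ≤ f i)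
    (hs : s.Nonempty) : ∑ i ∈ s, f i ≤ ∏ i ∈ s, f i := by
  induction hs using Finset.Nonempty.cons_induction with
  | singleton a => simp
  | cons a s has hs ih =>
      rw [Finset.sum_cons, Finset.prod_cons]
      have h1 : ∑ i ∈ s, f i ≤ ∏ i ∈ s, f i := ih (fun i hi => h i (Finset.mem_cons_of_mem hi))
      have h2 : 2 ≤ f a := h a (Finset.mem_cons_self a s)
      have h3 : 2 ≤ ∏ i ∈ s, f i := by
        obtain ⟨b, hb⟩ := hs
        calc 2 ≤ f b := h b (Finset.mem_cons_of_mem hb)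
        _ ≤ ∏ i ∈ s, f i := Finset.single_le_prod'
            (fun i hi => Nat.one_le_iff_ne_zero.mpr
              (by have := h i (Finset.mem_cons_of_mem hi); omega)) hb
      nlinarith

lemma aux_prod_dvd {α : Type*} (s : Finset α) (f : α → ℕ) (n : ℕ)
    (hcop : ∀ i ∈ s, ∀ j ∈ s, i ≠ j → Nat.Coprime (f i) (f j))
    (hdvd : ∀ i ∈ s, f i ∣ n) : (∏ i ∈ s, f i) ∣ n := by
  classical
  induction s using Finset.induction_on with
  | empty => simp
  | @insert a s has ih =>
      rw [Finset.prod_insert has]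
      refine Nat.Coprime.mul_dvd_of_dvd_of_dvd ?_ (hdvd a (Finset.mem_insert_self a s)) ?_
      · exact Nat.Coprime.prod_right fun i hi => hcop a (Finset.mem_insert_self a s) i
          (Finset.mem_insert_of_mem hi) (fun h => has (h ▸ hi))
      · exact ih (fun i hi j hj hij => hcop i (Finset.mem_insert_of_mem hi) j
          (Finset.mem_insert_of_mem hj) hij) (fun i hi => hdvd i (Finset.mem_insert_of_mem hi))

/-- Hypersurface case: for a regular pair `((d₁), (a₀, …, a_N))` of general type with
`N > 1` and every weight dividing the degree, the degree is a positive integer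
combination of the weights. -/
theorem stmt_12 {N : ℕ} (d : Fin 1 → ℕ) (a : Fin (N + 1) → ℕ)
    (hd : 0 < d 0) (ha : ∀ l, 0 < a l)
    (hdvd : ∀ l, a l ∣ d 0)
    (hreg : IsRegularPair d a)
    (hgt : ∑ l, a l < d 0)
    (hN : 1 < N) :
    ∃ β : Fin (N + 1) → ℕ, (∀ l, 0 < β l) ∧ d 0 = ∑ l, β l * a l := by
  classical
  have hcop : ∀ i j : Fin (N + 1), i ≠ j → Nat.Coprime (a i) (a j) := by
    intro i j hij
    by_contra h
    have hgpos : 0 < Nat.gcd (a i) (a j) := Nat.gcd_pos_of_pos_left _ (ha i)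
    have hg : 1 < Nat.gcd (a i) (a j) := by
      unfold Nat.Coprime at h; omega
    have hIg : ({i, j} : Finset (Fin (N + 1))).gcd a = Nat.gcd (a i) (a j) := by
      simp [Finset.gcd_insert, Finset.gcd_singleton]; rfl
    obtain ⟨J, hJcard, _⟩ := hreg {i, j} (by rw [hIg]; exact hg)
    have hc2 : ({i, j} : Finset (Fin (N + 1))).card = 2 := by
      rw [Finset.card_insert_of_notMem (by simp [hij]), Finset.card_singleton]
    have : J.card ≤ 1 := by
      calc J.card ≤ Fintype.card (Fin 1) := Finset.card_le_univ J
      _ = 1 := by simp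
    omega
  by_cases hone : ∃ i, a i = 1
  · -- some weight equals 1
    obtain ⟨i, hi⟩ := hone
    refine ⟨fun l => if l = i then d 0 + 1 - ∑ m, a m else 1, fun l => ?_, ?_⟩
    · by_cases hl : l = i
      · simp only [if_pos hl]; omega
      · simp only [if_neg hl]; omega
    · have hsplit : ∑ l, (if l = i then d 0 + 1 - ∑ m, a m else 1) * a l
          = (d 0 + 1 - ∑ m, a m) * a i + ∑ l ∈ Finset.univ.erase i, a l := by
        rw [← Finset.add_sum_erase _ _ (Finset.mem_univ i)]
        simp only [if_pos rfl]
        congr 1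
        refine Finset.sum_congr rfl fun l hl => ?_
        rw [if_neg (Finset.mem_erase.mp hl).1, one_mul]
      have herase : a i + ∑ l ∈ Finset.univ.erase i, a l = ∑ m, a m :=
        Finset.add_sum_erase _ a (Finset.mem_univ i)
      rw [hsplit, hi, mul_one]
      omega
  · -- all weights ≥ 2
    push_neg at hone
    have h2 : ∀ l, 2 ≤ a l := fun l => by have := ha l; have := hone l; omega
    set i : Fin (N + 1) := ⟨0, by omega⟩ with hidef
    set j : Fin (N + 1) := ⟨1, by omega⟩ with hjdef
    have hij : i ≠ j := by simp [hidef, hjdef, Fin.ext_iff]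
    set s : Finset (Fin (N + 1)) := (Finset.univ.erase i).erase j with hsdef
    have hsne : s.Nonempty := by
      refine ⟨⟨2, by omega⟩, ?_⟩
      simp [hsdef, Fin.ext_iff, hidef, hjdef]
    have hProd : (∏ l, a l) ∣ d 0 :=
      aux_prod_dvd _ a _ (fun x _ y _ hxy => hcop x y hxy) (fun l _ => hdvd l)
    have hjmem : j ∈ Finset.univ.erase i := by
      simp [Fin.ext_iff, hidef, hjdef]
    have hProdSplit : ∏ l, a l = a i * (a j * ∏ l ∈ s, a l) := by
      rw [← Finset.mul_prod_erase _ a (Finset.mem_univ i), ← Finset.mul_prod_erase _ a hjmem]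
    set Q := ∏ l ∈ s, a l with hQdef
    set S := ∑ l ∈ s, a l with hSdef
    have hQ2 : 2 ≤ Q := by
      obtain ⟨b, hb⟩ := hsne
      calc 2 ≤ a b := h2 b
      _ ≤ Q := Finset.single_le_prod'
          (fun l _ => Nat.one_le_iff_ne_zero.mpr (by have := h2 l; omega)) hb
    have hSQ : S ≤ Q := aux_sum_le_prod s a (fun l _ => h2 l) hsne
    have hSpos : 0 < S := by
      obtain ⟨b, hb⟩ := hsne
      exact lt_of_lt_of_le (ha b) (Finset.single_le_sum (fun l _ => Nat.zero_le _) hb)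
    have hA6 : 6 ≤ a i * a j := by
      have hne : a i ≠ a j := by
        intro h
        have hc := hcop i j hij
        unfold Nat.Coprime at hc
        rw [h, Nat.gcd_self] at hc
        have := h2 j; omega
      rcases Nat.lt_or_ge (a i) (a j) with hlt | hge
      · have h3 : 3 ≤ a j := by have := h2 i; omega
        calc 6 = 2 * 3 := rfl
        _ ≤ a i * a j := Nat.mul_le_mul (h2 i) h3
      · have h3 : 3 ≤ a i := by have := h2 j; omega
        calc 6 = 3 * 2 := rfl
        _ ≤ a i * a j := Nat.mul_le_mul h3 (h2 j)
    have hdP : a i * a j * Q ≤ d 0 := by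
      rw [← mul_assoc] at hProdSplit
      rw [← hProdSplit]
      exact Nat.le_of_dvd hd hProd
    have hkey : a i * a j + S < d 0 := by
      have h1 : a i * a j + Q < a i * a j * Q := by nlinarith
      omega
    have haiaj : a i + a j ≤ a i * a j := by nlinarith [h2 i, h2 j]
    obtain ⟨x, y, hxy⟩ := aux_chicken (a i) (a j) (d 0 - S - a i - a j)
      (hcop i j hij) (h2 i) (h2 j) (by omega)
    refine ⟨fun l => if l = i then x + 1 else if l = j then y + 1 else 1, fun l => ?_, ?_⟩
    · by_cases hl : l = i
      · simp only [if_pos hl]; omega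
      · by_cases hl' : l = j
        · simp only [if_neg hl, if_pos hl']; omega
        · simp only [if_neg hl, if_neg hl']; omega
    · have hsplit : ∑ l, (if l = i then x + 1 else if l = j then y + 1 else 1) * a l
          = (x + 1) * a i + ((y + 1) * a j + S) := by
        rw [← Finset.add_sum_erase _ _ (Finset.mem_univ i),
            ← Finset.add_sum_erase _ _ hjmem]
        simp only [if_pos rfl, if_neg (show j ≠ i from fun h => hij h.symm)]
        congr 2
        refine Finset.sum_congr rfl fun l hl => ?_
        have h1 := (Finset.mem_erase.mp hl).1
        have h2' := (Finset.mem_erase.mp (Finset.mem_erase.mp hl).2).1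
        rw [if_neg h1, if_neg h2', one_mul]
      rw [hsplit]
      have e1 : (x + 1) * a i = x * a i + a i := by ring
      have e2 : (y + 1) * a j = y * a j + a j := by ring
      rw [e1, e2]
      omega
end

section
/- Let m ≥ 2 and let p_0 < ... < p_m < p_{m+1} be primes with 1/p_0 + ... + 1/p_m < 1 < 1/p_0 + ... + 1/p_m + 1/p_{m+1}. Set a_s = (p_0···p_m)/p_s for s = 0, ..., m, and let i = 2·p_0···p_m − 2(a_0 + ... + a_m). Then i > 0, and for all s, t ∈ {0, ..., m} one has i − a_s − a_t < 0. -/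
open Finset

/-- The product `p 0 ⋯ p m`. -/
def Pprod (p : ℕ → ℕ) (m : ℕ) : ℕ := ∏ i ∈ range (m + 1), p i

/-- The weight `a s = (p 0 ⋯ p m) / p s`. -/
def wt (p : ℕ → ℕ) (m s : ℕ) : ℕ := Pprod p m / p s

/-- The index `i = 2·p 0 ⋯ p m − 2(a 0 + ⋯ + a m)`, as an integer. -/
def idx (p : ℕ → ℕ) (m : ℕ) : ℤ :=
  2 * (Pprod p m : ℤ) - 2 * ∑ s ∈ range (m + 1), (wt p m s : ℤ)

/-!
The index factors as `i = 2·P·(1 − ∑_{s ≤ m} 1/p s)` with `P = p 0 ⋯ p m`. The first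
inequality gives `i > 0`; the second gives `1 − ∑_{s ≤ m} 1/p s < 1/p (m+1)`, so
`i < 2·P/p (m+1)`, and `P/p (m+1) < P/p s = a s` because `p s < p (m+1)`.
-/

section

variable {p : ℕ → ℕ} {m : ℕ}

lemma Pprod_pos (hp : ∀ i ≤ m, 0 < p i) : 0 < Pprod p m :=
  prod_pos fun i hi => hp i (Nat.lt_succ_iff.mp (mem_range.mp hi))

lemma cast_wt (hp : ∀ i ≤ m, 0 < p i) {s : ℕ} (hs : s ≤ m) :
    (wt p m s : ℚ) = Pprod p m / p s :=
  Nat.cast_div (dvd_prod_of_mem p (mem_range.mpr (Nat.lt_succ_of_le hs)))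
    (Nat.cast_ne_zero.mpr (hp s hs).ne')

lemma cast_idx (hp : ∀ i ≤ m, 0 < p i) :
    (idx p m : ℚ) = 2 * Pprod p m * (1 - ∑ s ∈ range (m + 1), (1 : ℚ) / p s) := by
  have hsum : ∑ s ∈ range (m + 1), (wt p m s : ℚ)
      = Pprod p m * ∑ s ∈ range (m + 1), (1 : ℚ) / p s := by
    rw [mul_sum]
    refine sum_congr rfl fun s hs => ?_
    rw [cast_wt hp (Nat.lt_succ_iff.mp (mem_range.mp hs)), mul_one_div]
  push_cast [idx]
  rw [hsum]
  ring

lemma idx_pos (hp : ∀ i ≤ m, 0 < p i) (h1 : ∑ i ∈ range (m + 1), (1 : ℚ) / p i < 1) :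
    0 < idx p m := by
  have hP : (0 : ℚ) < Pprod p m := by exact_mod_cast Pprod_pos hp
  have : (0 : ℚ) < idx p m := by
    rw [cast_idx hp]
    have : (0 : ℚ) < 1 - ∑ s ∈ range (m + 1), (1 : ℚ) / p s := sub_pos.mpr h1
    positivity
  exact_mod_cast this

lemma cast_idx_lt (hp : ∀ i ≤ m, 0 < p i)
    (h2 : 1 < ∑ i ∈ range (m + 2), (1 : ℚ) / p i) :
    (idx p m : ℚ) < 2 * (Pprod p m / p (m + 1)) := by
  have hP : (0 : ℚ) < Pprod p m := by exact_mod_cast Pprod_pos hp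
  have hgap : 1 - ∑ s ∈ range (m + 1), (1 : ℚ) / p s < 1 / p (m + 1) := by
    rw [sum_range_succ] at h2
    linarith
  calc (idx p m : ℚ) = 2 * Pprod p m * (1 - ∑ s ∈ range (m + 1), (1 : ℚ) / p s) := cast_idx hp
    _ < 2 * Pprod p m * (1 / p (m + 1)) := by gcongr
    _ = 2 * (Pprod p m / p (m + 1)) := by ring

lemma div_lt_cast_wt (hp : ∀ i ≤ m, 0 < p i) {s : ℕ} (hs : s ≤ m) (hlt : p s < p (m + 1)) :
    (Pprod p m : ℚ) / p (m + 1) < wt p m s := by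
  rw [cast_wt hp hs]
  exact div_lt_div_of_pos_left (by exact_mod_cast Pprod_pos hp)
    (by exact_mod_cast hp s hs) (by exact_mod_cast hlt)

end

theorem stmt_15_general (m : ℕ) (p : ℕ → ℕ)
    (hp : ∀ i, i ≤ m + 1 → (p i).Prime)
    (hmono : ∀ i j, i < j → j ≤ m + 1 → p i < p j)
    (h1 : ∑ i ∈ range (m + 1), (1 : ℚ) / p i < 1)
    (h2 : 1 < ∑ i ∈ range (m + 2), (1 : ℚ) / p i) :
    0 < idx p m ∧
      ∀ s t, s ≤ m → t ≤ m → idx p m - wt p m s - wt p m t < 0 := by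
  have hpos : ∀ i ≤ m, 0 < p i := fun i hi => (hp i (by omega)).pos
  refine ⟨idx_pos hpos h1, fun s t hs ht => ?_⟩
  have hlt : ∀ {u}, u ≤ m → p u < p (m + 1) := fun hu => hmono _ _ (by omega) le_rfl
  have : (idx p m : ℚ) - wt p m s - wt p m t < 0 := by
    linarith [cast_idx_lt hpos h2, div_lt_cast_wt hpos hs (hlt hs),
      div_lt_cast_wt hpos ht (hlt ht)]
  exact_mod_cast this

/-- For primes `p 0 < ⋯ < p m < p (m+1)` with
`1/p 0 + ⋯ + 1/p m < 1 < 1/p 0 + ⋯ + 1/p m + 1/p (m+1)` and `m ≥ 2`,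
the index `i` is positive, but `i < a s + a t` for all `s, t ≤ m`. -/
theorem stmt_15 (m : ℕ) (hm : 2 ≤ m) (p : ℕ → ℕ)
    (hp : ∀ i, i ≤ m + 1 → (p i).Prime)
    (hmono : ∀ i j, i < j → j ≤ m + 1 → p i < p j)
    (h1 : ∑ i ∈ range (m + 1), (1 : ℚ) / p i < 1)
    (h2 : 1 < ∑ i ∈ range (m + 2), (1 : ℚ) / p i) :
    0 < idx p m ∧
      ∀ s t, s ≤ m → t ≤ m → idx p m - wt p m s - wt p m t < 0 :=
  stmt_15_general m p hp hmono h1 h2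
end

section
/- Let m ≥ 2 and let p_0 < ... < p_m < p_{m+1} be primes with 1/p_0 + ... + 1/p_m < 1 < 1/p_0 + ... + 1/p_m + 1/p_{m+1}, and suppose p_{m+1} > 6. Set a_s = (p_0···p_m)/p_s and i = 2·p_0···p_m − 2(a_0 + ... + a_m). Then i ≠ a_l for every l ∈ {0, ..., m}. -/
open Finset

/-!
Modulo `p l` the product and every weight other than `a l` vanish, so `i ≡ -2 a l`; hence
`i = a l` gives `p l ∣ 3 a l`, and as the primes are distinct `p l ∤ a l`, so `p l = 3`.
Dividing `i = a l` by `p 0 ⋯ p m` gives `2 (1 - ∑ 1/p s) = 1/3`, i.e. `∑_{s ≤ m} 1/p s = 5/6`,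
and then `1 < 5/6 + 1/p (m+1)` forces `p (m+1) < 6`.
-/

theorem Pprod.dvd_of_le {p : ℕ → ℕ} {m l : ℕ} (hl : l ≤ m) : p l ∣ Pprod p m :=
  dvd_prod_of_mem p (mem_range.2 (Nat.lt_succ_of_le hl))

namespace wt

variable {p : ℕ → ℕ} {m l s : ℕ}

theorem eq_prod_erase (hs : s ≤ m) (hps : p s ≠ 0) :
    wt p m s = ∏ i ∈ (range (m + 1)).erase s, p i := by
  rw [wt, Pprod, ← prod_erase_mul _ _ (mem_range.2 (Nat.lt_succ_of_le hs)),
    Nat.mul_div_cancel _ (Nat.pos_of_ne_zero hps)]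

theorem dvd_of_ne (hl : l ≤ m) (hs : s ≤ m) (hsl : s ≠ l) : p l ∣ wt p m s := by
  by_cases hps : p s = 0
  · simp [wt, hps]
  · rw [eq_prod_erase hs hps]
    exact dvd_prod_of_mem p (mem_erase.2 ⟨hsl.symm, mem_range.2 (Nat.lt_succ_of_le hl)⟩)

theorem not_dvd_self (hp : ∀ s ≤ m, (p s).Prime) (hinj : Set.InjOn p (Set.Iic m))
    (hl : l ≤ m) : ¬ p l ∣ wt p m l := by
  rw [eq_prod_erase hl (hp l hl).ne_zero, Prime.dvd_finsetProd_iff (hp l hl).prime]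
  rintro ⟨i, hi, hdvd⟩
  obtain ⟨hil, hi⟩ := mem_erase.1 hi
  have hi : i ≤ m := Nat.le_of_lt_succ (mem_range.1 hi)
  exact hil (hinj hi hl ((Nat.prime_dvd_prime_iff_eq (hp l hl) (hp i hi)).1 hdvd).symm)

theorem cast_eq_div (hs : s ≤ m) : (wt p m s : ℚ) = Pprod p m / p s := by
  by_cases hps : p s = 0
  · simp [wt, hps]
  · exact Nat.cast_div (Pprod.dvd_of_le hs) (Nat.cast_ne_zero.2 hps)

end wt

namespace idx

variable {p : ℕ → ℕ} {m l : ℕ}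

theorem dvd_add_two_mul_wt (hl : l ≤ m) : (p l : ℤ) ∣ idx p m + 2 * wt p m l := by
  set others := ∑ s ∈ (range (m + 1)).erase l, (wt p m s : ℤ)
  have hP : (p l : ℤ) ∣ Pprod p m := Int.natCast_dvd_natCast.2 (Pprod.dvd_of_le hl)
  have hothers : (p l : ℤ) ∣ others := dvd_sum fun s hs =>
    Int.natCast_dvd_natCast.2 <| wt.dvd_of_ne hl
      (Nat.le_of_lt_succ (mem_range.1 (mem_of_mem_erase hs))) (ne_of_mem_erase hs)
  have hsplit : idx p m + 2 * wt p m l = 2 * (Pprod p m : ℤ) - 2 * others := by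
    rw [idx, ← add_sum_erase _ _ (mem_range.2 (Nat.lt_succ_of_le hl))]
    ring
  rw [hsplit]
  exact dvd_sub (dvd_mul_of_dvd_right hP 2) (dvd_mul_of_dvd_right hothers 2)

theorem cast_eq :
    (idx p m : ℚ) = 2 * Pprod p m * (1 - ∑ s ∈ range (m + 1), (1 : ℚ) / p s) := by
  rw [idx]
  push_cast
  rw [sum_congr rfl fun s hs => wt.cast_eq_div (Nat.le_of_lt_succ (mem_range.1 hs))]
  simp only [mul_sub, mul_one, mul_sum, mul_one_div, mul_div_assoc]

theorem prime_eq_three_of_eq_wt (hp : ∀ s ≤ m, (p s).Prime) (hinj : Set.InjOn p (Set.Iic m))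
    (hl : l ≤ m) (h : idx p m = wt p m l) : p l = 3 := by
  have hdvd : p l ∣ 3 * wt p m l := by
    have hdvdℤ := dvd_add_two_mul_wt (p := p) hl
    rw [h] at hdvdℤ
    exact_mod_cast (by ring : (wt p m l : ℤ) + 2 * wt p m l = 3 * wt p m l) ▸ hdvdℤ
  have h3 := ((hp l hl).dvd_mul.1 hdvd).resolve_right (wt.not_dvd_self hp hinj hl)
  exact (Nat.prime_dvd_prime_iff_eq (hp l hl) Nat.prime_three).1 h3

theorem sum_one_div_of_eq_wt (hP : Pprod p m ≠ 0) (hl : l ≤ m) (h : idx p m = wt p m l) :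
    ∑ s ∈ range (m + 1), (1 : ℚ) / p s = 1 - 1 / (2 * p l) := by
  have hQ : 2 * Pprod p m * (1 - ∑ s ∈ range (m + 1), (1 : ℚ) / p s) = Pprod p m / p l := by
    rw [← cast_eq, ← wt.cast_eq_div hl]
    exact_mod_cast h
  have hP' : (Pprod p m : ℚ) ≠ 0 := Nat.cast_ne_zero.2 hP
  field_simp at hQ
  linear_combination -hQ / 2

end idx

theorem stmt_16_general (m : ℕ) (p : ℕ → ℕ)
    (hp : ∀ i, i ≤ m + 1 → (p i).Prime)
    (hmono : ∀ i j, i < j → j ≤ m + 1 → p i < p j)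
    (h2 : 1 < ∑ i ∈ range (m + 2), (1 : ℚ) / p i)
    (h6 : 6 < p (m + 1)) :
    ∀ l, l ≤ m → idx p m ≠ (wt p m l : ℤ) := by
  intro l hl h
  have hprime : ∀ s ≤ m, (p s).Prime := fun s hs => hp s (by omega)
  have hinj : Set.InjOn p (Set.Iic m) :=
    StrictMonoOn.injOn fun i _ j hj hij => hmono i j hij (by simp at hj; omega)
  have hP : Pprod p m ≠ 0 :=
    prod_ne_zero_iff.2 fun s hs => (hprime s (Nat.le_of_lt_succ (mem_range.1 hs))).ne_zero
  have hsum := idx.sum_one_div_of_eq_wt hP hl h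
  rw [idx.prime_eq_three_of_eq_wt hprime hinj hl h] at hsum
  have hlast : (1 : ℚ) / p (m + 1) ≤ 1 / 7 :=
    one_div_le_one_div_of_le (by norm_num) (by exact_mod_cast h6)
  rw [sum_range_succ, hsum] at h2
  norm_num at h2 hlast
  linarith

/-- For primes `p 0 < ⋯ < p m < p (m+1)` with
`1/p 0 + ⋯ + 1/p m < 1 < 1/p 0 + ⋯ + 1/p m + 1/p (m+1)`, `m ≥ 2` and `p (m+1) > 6`,
the index `i` is different from every weight `a l`. -/
theorem stmt_16 (m : ℕ) (hm : 2 ≤ m) (p : ℕ → ℕ)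
    (hp : ∀ i, i ≤ m + 1 → (p i).Prime)
    (hmono : ∀ i j, i < j → j ≤ m + 1 → p i < p j)
    (h1 : ∑ i ∈ range (m + 1), (1 : ℚ) / p i < 1)
    (h2 : 1 < ∑ i ∈ range (m + 2), (1 : ℚ) / p i)
    (h6 : 6 < p (m + 1)) :
    ∀ l, l ≤ m → idx p m ≠ (wt p m l : ℤ) :=
  stmt_16_general m p hp hmono h2 h6
end
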